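/- Let F ⊆ G be lattice filters of an MV-algebra L. Then F ⊸ G = ((F ⊸ G) ⊸ G) ⊸ G. -/

import Mathlib

/-- An MV-algebra: a commutative monoid `(L, ⊕, 0)` with a unary `¬` satisfying
`¬¬x = x`, `x ⊕ ¬0 = ¬0` and `¬(¬x ⊕ y) ⊕ y = ¬(¬y ⊕ x) ⊕ x`. -/
class MV (L : Type*) where
  add : L → L → L
  zero : L
  neg : L → L
  add_assoc : ∀ x y z : L, add (add x y) z = add x (add y z)
  add_comm : ∀ x y : L, add x y = add y x
  add_zero : ∀ x : L, add x zero = x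
  neg_neg : ∀ x : L, neg (neg x) = x
  add_neg_zero : ∀ x : L, add x (neg zero) = neg zero
  luk : ∀ x y : L, add (neg (add (neg x) y)) y = add (neg (add (neg y) x)) x

namespace MV

variable {L : Type*} [MV L]

/-- `1 = ¬0`. -/
def one : L := neg zero

/-- `x → y = ¬x ⊕ y`. -/
def imp (x y : L) : L := add (neg x) y

/-- `x ⊗ y = ¬(¬x ⊕ ¬y)`. -/
def otimes (x y : L) : L := neg (add (neg x) (neg y))

/-- `x ∨ y = (x → y) → y`. -/
def join (x y : L) : L := imp (imp x y) y

/-- `x ∧ y = ¬(¬x ∨ ¬y)`. -/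
def meet (x y : L) : L := neg (join (neg x) (neg y))

/-- `x ≤ y` iff `x → y = 1`. -/
def le (x y : L) : Prop := imp x y = one

/-- `x < y` iff `x ≤ y` and `x ≠ y`. -/
def lt (x y : L) : Prop := le x y ∧ x ≠ y

/-- A lattice filter: nonempty, upward closed, closed under `∧`. -/
def IsLatticeFilter (F : Set L) : Prop :=
  F.Nonempty ∧ (∀ x y : L, x ∈ F → le x y → y ∈ F) ∧
    (∀ x y : L, x ∈ F → y ∈ F → meet x y ∈ F)

/-- A prime lattice filter: a proper lattice filter such that
`x ∨ y ∈ F` implies `x ∈ F` or `y ∈ F`. -/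
def IsPrimeFilter (F : Set L) : Prop :=
  IsLatticeFilter F ∧ F ≠ Set.univ ∧ ∀ x y : L, join x y ∈ F → x ∈ F ∨ y ∈ F

/-- `F ⊸ G = {z | ∀ a ∉ G, z → a ∉ F}` (intended for `F ⊆ G`). -/
def lolli (F G : Set L) : Set L := {z | ∀ a ∉ G, imp z a ∉ F}

/-- The general `F ⊸ G = (F ∩ G) ⊸ G`. -/
def lolli' (F G : Set L) : Set L := lolli (F ∩ G) G

/-- The kernel `K(F) = {z | ∀ a ∉ F, z → a ∉ F}`. -/
def ker (F : Set L) : Set L := {z | ∀ a ∉ F, imp z a ∉ F}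

/-- `F⁺ = {z | ¬z ∉ F}`. -/
def plus (F : Set L) : Set L := {z | neg z ∉ F}

/-- An implication filter: contains `1` and is closed under modus ponens. -/
def IsImplicationFilter (P : Set L) : Prop :=
  (one : L) ∈ P ∧ ∀ x y : L, x ∈ P → imp x y ∈ P → y ∈ P

/-- `x ~_P y` iff `x → y ∈ P` and `y → x ∈ P`. -/
def simP (P : Set L) (x y : L) : Prop := imp x y ∈ P ∧ imp y x ∈ P

/-- `J_u(F, P) = {z | ∃ f ∈ F, z ~_P f}`. -/
def Ju (F P : Set L) : Set L := {z | ∃ f ∈ F, simP P z f}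

/-- `J_d(F, P) = (J_u(F⁺, P))⁺`. -/
def Jd (F P : Set L) : Set L := plus (Ju (plus F) P)

end MV

open MV

/-!
`X ↦ X ⊸ G` is antitone, and every upward-closed `X` lies in `(X ⊸ G) ⊸ G`: for `z ∈ X` and
`a ∉ G`, the witness `a` itself shows `z → a ∉ X ⊸ G`, because `(z → a) → a = z ∨ a ≥ z`.
Since `→` is antitone in its first argument, `F ⊸ G` is again upward closed, and the usual
Galois-connection argument gives `F ⊸ G = ((F ⊸ G) ⊸ G) ⊸ G`.
-/

namespace MV

variable {L : Type*} [MV L]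

def IsUpClosed (X : Set L) : Prop := ∀ x y : L, x ∈ X → le x y → y ∈ X

lemma add_one (x : L) : add x (one : L) = one := add_neg_zero x

lemma one_add (x : L) : add (one : L) x = one := by
  rw [MV.add_comm]; exact add_one x

lemma add_left_comm (x y z : L) : add x (add y z) = add y (add x z) := by
  rw [← MV.add_assoc, MV.add_comm x y, MV.add_assoc]

lemma neg_one : neg (one : L) = zero := MV.neg_neg zero

lemma zero_add (x : L) : add (zero : L) x = x := by
  rw [MV.add_comm]; exact MV.add_zero x

lemma neg_add_self (x : L) : add (neg x) x = one := by
  simpa only [neg_one, zero_add, add_one] using luk (one : L) x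

lemma add_neg_self (x : L) : add x (neg x) = one := by
  rw [MV.add_comm]; exact neg_add_self x

lemma le_join_left (x y : L) : le x (join x y) := by
  change add (neg x) (add (neg (add (neg x) y)) y) = one
  rw [MV.add_comm (neg (add (neg x) y)) y, ← MV.add_assoc]
  exact add_neg_self _

lemma imp_le_imp_of_le {x y : L} (h : le x y) (a : L) : le (imp y a) (imp x a) := by
  change add (neg (add (neg y) a)) (add (neg x) a) = one
  have hxy : add (neg x) y = (one : L) := h
  calc add (neg (add (neg y) a)) (add (neg x) a)
      = add (neg x) (add (neg (add (neg y) a)) a) := add_left_comm _ _ _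
    _ = add (neg x) (add (neg (add (neg a) y)) y) := by rw [luk]
    _ = add (add (neg x) y) (neg (add (neg a) y)) := by
        rw [MV.add_comm (neg (add (neg a) y)) y, ← MV.add_assoc]
    _ = one := by rw [hxy, one_add]

lemma IsUpClosed.lolli {F : Set L} (hF : IsUpClosed F) (G : Set L) :
    IsUpClosed (lolli F G) :=
  fun _ _ hz hzw a ha hwa => hz a ha (hF _ _ hwa (imp_le_imp_of_le hzw a))

lemma lolli_anti_left {F F' : Set L} (h : F ⊆ F') (G : Set L) :
    lolli F' G ⊆ lolli F G :=
  fun _ hz a ha hfa => hz a ha (h hfa)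

lemma subset_lolli_lolli {X : Set L} (hX : IsUpClosed X) (G : Set L) :
    X ⊆ lolli (lolli X G) G :=
  fun z hz a ha hza => hza a ha (hX _ _ hz (le_join_left z a))

end MV

theorem stmt_17_general {L : Type*} [MV L] (F G : Set L)
    (hF : IsLatticeFilter F) :
    lolli F G = lolli (lolli (lolli F G) G) G := by
  have hF_up : IsUpClosed F := hF.2.1
  exact (subset_lolli_lolli (hF_up.lolli G) G).antisymm
    (lolli_anti_left (subset_lolli_lolli hF_up G) G)

/-- For lattice filters `F ⊆ G`,
`F ⊸ G = ((F ⊸ G) ⊸ G) ⊸ G`. -/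
theorem stmt_17 {L : Type*} [MV L] (F G : Set L)
    (hF : IsLatticeFilter F) (hG : IsLatticeFilter G) (hFG : F ⊆ G) :
    lolli F G = lolli (lolli (lolli F G) G) G :=
  stmt_17_general F G hF
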